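/- arXiv:2106.06264 — 2 statements merged into one kernel-verified Lean document; each statement's English description precedes it below -/
import Mathlib

section
/- For every integer k ≥ 0, every z ≥ 1 and all real numbers 0 < a < b, one has ∫_a^b dx / ((x² + x)·UB_k(x,z)) = 2·(LB_{k+1}(a,z) − LB_{k+1}(b,z)). -/
open Real

/-- `L x z = z + log(1 + 1/x)`. -/
noncomputable def L (x z : ℝ) : ℝ := z + Real.log (1 + x⁻¹)

/-- `LB k x z = Σ_{j=0}^k ((1/2) log L(x,z))^j / j!`. -/
noncomputable def LB (k : ℕ) (x z : ℝ) : ℝ :=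
  ∑ j ∈ Finset.range (k + 1), ((1 / 2 : ℝ) * Real.log (L x z)) ^ j / (Nat.factorial j)

/-- `UB k x z = L(x,z) / LB_k(x,z)`. -/
noncomputable def UB (k : ℕ) (x z : ℝ) : ℝ := L x z / LB k x z

lemma L_one_le {x z : ℝ} (hx : 0 < x) (hz : 1 ≤ z) : 1 ≤ L x z := by
  have h1 : (1:ℝ) ≤ 1 + x⁻¹ := by
    have := inv_pos.mpr hx; linarith
  have : 0 ≤ Real.log (1 + x⁻¹) := Real.log_nonneg h1
  unfold L; linarith

lemma L_pos {x z : ℝ} (hx : 0 < x) (hz : 1 ≤ z) : 0 < L x z :=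
  lt_of_lt_of_le one_pos (L_one_le hx hz)

lemma LB_pos {x z : ℝ} (m : ℕ) (hx : 0 < x) (hz : 1 ≤ z) : 0 < LB m x z := by
  have hc : 0 ≤ (1/2:ℝ) * Real.log (L x z) := by
    have := Real.log_nonneg (L_one_le hx hz); linarith
  have h0 : (0:ℕ) ∈ Finset.range (m+1) := by simp
  have h := Finset.single_le_sum
    (f := fun j => ((1 / 2 : ℝ) * Real.log (L x z)) ^ j / (Nat.factorial j))
    (fun j _ => by positivity) h0
  simp only [pow_zero, Nat.factorial_zero, Nat.cast_one, div_one] at h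
  unfold LB; linarith

lemma hasDerivAt_L {x : ℝ} (z : ℝ) (hx : 0 < x) :
    HasDerivAt (fun y => L y z) (-(x ^ 2 + x)⁻¹) x := by
  have h1 : (0:ℝ) < 1 + x⁻¹ := by have := inv_pos.mpr hx; linarith
  have hinv : HasDerivAt (fun y : ℝ => 1 + y⁻¹) (-(x ^ 2)⁻¹) x :=
    (hasDerivAt_inv (ne_of_gt hx)).const_add (1:ℝ)
  have hlog := hinv.log (ne_of_gt h1)
  have := hlog.const_add z
  refine this.congr_deriv ?_
  have hx2 : x ^ 2 ≠ 0 := by positivity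
  have hxx : x ^ 2 + x ≠ 0 := by positivity
  field_simp

lemma hasDerivAt_LB (m : ℕ) {x z : ℝ} (hx : 0 < x) (hz : 1 ≤ z) :
    HasDerivAt (fun y => LB (m + 1) y z)
      ((1/2 : ℝ) * (-(x ^ 2 + x)⁻¹ / L x z) * LB m x z) x := by
  have hLpos := L_pos hx hz
  have hlog : HasDerivAt (fun y => Real.log (L y z)) (-(x ^ 2 + x)⁻¹ / L x z) x :=
    (hasDerivAt_L z hx).log (ne_of_gt hLpos)
  have hc : HasDerivAt (fun y => (1/2:ℝ) * Real.log (L y z))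
      ((1/2:ℝ) * (-(x ^ 2 + x)⁻¹ / L x z)) x := hlog.const_mul _
  set c : ℝ := (1/2:ℝ) * Real.log (L x z) with hcdef
  set d : ℝ := (1/2:ℝ) * (-(x ^ 2 + x)⁻¹ / L x z) with hddef
  have hterm : ∀ j : ℕ, HasDerivAt
      (fun y => ((1/2:ℝ) * Real.log (L y z)) ^ j / (Nat.factorial j))
      ((j : ℝ) * c ^ (j - 1) * d / (Nat.factorial j)) x := fun j => (hc.pow j).div_const _
  have hsum : HasDerivAt (fun y => LB (m + 1) y z)
      (∑ j ∈ Finset.range (m + 2), (j : ℝ) * c ^ (j - 1) * d / (Nat.factorial j)) x := by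
    have := HasDerivAt.fun_sum (fun j (_ : j ∈ Finset.range (m + 2)) => hterm j)
    simpa [LB] using this
  convert hsum using 1
  rw [Finset.sum_range_succ']
  simp only [Nat.cast_zero, zero_mul, Nat.factorial_zero, Nat.cast_one]
  rw [show (LB m x z) = ∑ j ∈ Finset.range (m + 1), c ^ j / (Nat.factorial j) from rfl]
  rw [Finset.mul_sum]
  norm_num
  apply Finset.sum_congr rfl
  intro j _
  have hfac : (Nat.factorial (j + 1) : ℝ) = (j + 1) * Nat.factorial j := by
    push_cast [Nat.factorial_succ]; ring
  have hfj : (Nat.factorial j : ℝ) ≠ 0 := by positivity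
  have hj1 : ((j:ℝ) + 1) ≠ 0 := by positivity
  rw [hfac]
  field_simp

theorem stmt_3 (k : ℕ) (z : ℝ) (hz : 1 ≤ z) (a b : ℝ) (ha : 0 < a) (hab : a < b) :
    ∫ x in a..b, ((x ^ 2 + x) * UB k x z)⁻¹ =
      2 * (LB (k + 1) a z - LB (k + 1) b z) := by
  have hab' : a ≤ b := le_of_lt hab
  have huIcc : Set.uIcc a b = Set.Icc a b := Set.uIcc_of_le hab'
  have hmem : ∀ x ∈ Set.uIcc a b, 0 < x := by
    intro x hx; rw [huIcc] at hx; exact lt_of_lt_of_le ha hx.1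
  have hderiv : ∀ x ∈ Set.uIcc a b,
      HasDerivAt (fun y => -2 * LB (k + 1) y z) (((x ^ 2 + x) * UB k x z)⁻¹) x := by
    intro x hx
    have hx0 := hmem x hx
    have h := (hasDerivAt_LB k hx0 hz).const_mul (-2 : ℝ)
    refine h.congr_deriv ?_
    have hL := L_pos hx0 hz
    have hLB := LB_pos k hx0 hz
    have hx2 : (0:ℝ) < x ^ 2 + x := by positivity
    unfold UB
    field_simp
  have hLc : ContinuousOn (fun x => L x z) (Set.uIcc a b) := by
    unfold L
    apply continuousOn_const.add
    apply ContinuousOn.log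
    · exact continuousOn_const.add (continuousOn_id.inv₀ (fun x hx => ne_of_gt (hmem x hx)))
    · intro x hx
      have : (0:ℝ) < x⁻¹ := inv_pos.mpr (hmem x hx)
      positivity
  have hLne : ∀ x ∈ Set.uIcc a b, L x z ≠ 0 := fun x hx => ne_of_gt (L_pos (hmem x hx) hz)
  have hLBc : ContinuousOn (fun x => LB k x z) (Set.uIcc a b) := by
    unfold LB
    exact continuousOn_finset_sum _
      (fun j _ => ((continuousOn_const.mul (hLc.log hLne)).pow j).div_const _)
  have hLBne : ∀ x ∈ Set.uIcc a b, LB k x z ≠ 0 :=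
    fun x hx => ne_of_gt (LB_pos k (hmem x hx) hz)
  have hcont : ContinuousOn (fun x => ((x ^ 2 + x) * UB k x z)⁻¹) (Set.uIcc a b) := by
    apply ContinuousOn.inv₀
    · have hUBc : ContinuousOn (fun x => UB k x z) (Set.uIcc a b) := by
        unfold UB; exact hLc.div hLBc hLBne
      exact (continuousOn_pow 2 |>.add continuousOn_id).mul hUBc
    · intro x hx
      have hx0 := hmem x hx
      have hx2 : (0:ℝ) < x ^ 2 + x := by positivity
      have : UB k x z ≠ 0 := div_ne_zero (hLne x hx) (hLBne x hx)
      exact mul_ne_zero (ne_of_gt hx2) this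
  rw [intervalIntegral.integral_eq_sub_of_hasDerivAt hderiv (hcont.intervalIntegrable)]
  ring
end

section
/- There exists a constant C > 0 such that for every integer k ≥ 0, every z ≥ 1, every λ > 0 and every p ∈ ℝ², one has | ∫_{λ+|p|²}^{1} dρ/(ρ·LB_k(ρ,z)) − ∫_{λ+|p|²}^{1} dρ/((ρ + ρ²)·LB_k(ρ,z)) | ≤ C·UB_k(λ + |p|², z)/z, where both integrals are interpreted as 0 when λ + |p|² ≥ 1. -/
open Real

section Aux

noncomputable def E (k : ℕ) (t : ℝ) : ℝ := ∑ j ∈ Finset.range (k + 1), t ^ j / (Nat.factorial j)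

lemma E_nonneg (k : ℕ) {t : ℝ} (ht : 0 ≤ t) : 0 ≤ E k t :=
  Finset.sum_nonneg fun j _ => by positivity

lemma one_le_E (k : ℕ) {t : ℝ} (ht : 0 ≤ t) : 1 ≤ E k t := by
  have h := Finset.single_le_sum (f := fun j => t ^ j / (Nat.factorial j))
    (fun j _ => by positivity) (Finset.mem_range.2 (Nat.succ_pos k))
  simpa [E] using h

lemma E_mono (k : ℕ) {s t : ℝ} (hs : 0 ≤ s) (hst : s ≤ t) : E k s ≤ E k t := by
  apply Finset.sum_le_sum
  intro j _
  gcongr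

lemma hasDerivAt_E (k : ℕ) (s : ℝ) :
    HasDerivAt (fun x : ℝ => ∑ j ∈ Finset.range (k+1), x ^ j / (Nat.factorial j))
      (∑ j ∈ Finset.range k, s ^ j / (Nat.factorial j)) s := by
  have h : HasDerivAt (fun x : ℝ => ∑ j ∈ Finset.range (k+1), x ^ j / (Nat.factorial j))
      (∑ j ∈ Finset.range (k+1), ((j : ℝ) * s ^ (j-1)) / (Nat.factorial j)) s := by
    apply HasDerivAt.fun_sum
    intro j _
    simpa [div_eq_mul_inv] using (hasDerivAt_pow j s).div_const (Nat.factorial j)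
  convert h using 1
  rw [Finset.sum_range_succ' (fun j => ((j:ℝ) * s ^ (j-1)) / (Nat.factorial j)) k]
  simp only [Nat.cast_zero, zero_mul, Nat.factorial_zero, Nat.cast_one, zero_div, add_zero]
  apply Finset.sum_congr rfl
  intro i _
  have h1 : (Nat.factorial (i+1) : ℝ) = (i+1) * Nat.factorial i := by
    push_cast [Nat.factorial_succ]; ring
  have h2 : (Nat.factorial i : ℝ) ≠ 0 := Nat.cast_ne_zero.2 (Nat.factorial_ne_zero i)
  rw [Nat.add_sub_cancel, h1]
  push_cast
  field_simp [h1]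

lemma E_exp_antitone (k : ℕ) : AntitoneOn (fun s => E k s * Real.exp (-s)) (Set.Ici (0:ℝ)) := by
  have hd : ∀ s : ℝ, HasDerivAt (fun s => E k s * Real.exp (-s))
      ((∑ j ∈ Finset.range k, s ^ j / (Nat.factorial j)) * Real.exp (-s) + E k s * (-Real.exp (-s))) s := by
    intro s
    have he : HasDerivAt (fun s : ℝ => Real.exp (-s)) (-Real.exp (-s)) s := by
      simpa using (hasDerivAt_neg s).exp
    exact (hasDerivAt_E k s).mul he
  apply antitoneOn_of_deriv_nonpos (convex_Ici 0)
  · exact fun s _ => ((hd s).continuousAt).continuousWithinAt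
  · exact fun s _ => (hd s).differentiableAt.differentiableWithinAt
  · intro s hs
    rw [interior_Ici] at hs
    rw [(hd s).deriv]
    have hE : E k s = (∑ j ∈ Finset.range k, s ^ j / (Nat.factorial j)) + s ^ k / Nat.factorial k := by
      rw [E, Finset.sum_range_succ]
    rw [hE]
    have hs0 : (0:ℝ) ≤ s := le_of_lt hs
    have : (0:ℝ) ≤ s ^ k / Nat.factorial k * Real.exp (-s) := by positivity
    ring_nf at this ⊢
    nlinarith [Real.exp_pos (-s)]

lemma E_le_exp_mul (k : ℕ) {t s : ℝ} (ht : 0 ≤ t) (hts : t ≤ s) :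
    E k s ≤ Real.exp (s - t) * E k t := by
  have h := E_exp_antitone k (Set.mem_Ici.2 ht) (Set.mem_Ici.2 (ht.trans hts)) hts
  have hes : (0:ℝ) < Real.exp s := Real.exp_pos s
  have := mul_le_mul_of_nonneg_right h hes.le
  calc E k s = E k s * Real.exp (-s) * Real.exp s := by
        rw [mul_assoc, ← Real.exp_add]; simp
    _ ≤ E k t * Real.exp (-t) * Real.exp s := this
    _ = Real.exp (s - t) * E k t := by
        rw [Real.exp_sub]
        rw [Real.exp_neg]
        field_simp


lemma LB_eq (k : ℕ) (x z : ℝ) : LB k x z = E k ((1/2) * Real.log (L x z)) := rfl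

lemma log_pos_inv {x : ℝ} (hx : 0 < x) : 0 < Real.log (1 + x⁻¹) :=
  Real.log_pos (by have := inv_pos.2 hx; linarith)

lemma z_le_L {x z : ℝ} (hx : 0 < x) : z ≤ L x z := by
  have := log_pos_inv hx; unfold L; linarith

lemma one_le_L {x z : ℝ} (hz : 1 ≤ z) (hx : 0 < x) : 1 ≤ L x z :=
  hz.trans (z_le_L hx)

lemma t_nonneg {x z : ℝ} (hz : 1 ≤ z) (hx : 0 < x) : 0 ≤ (1/2) * Real.log (L x z) := by
  have := Real.log_nonneg (one_le_L hz hx); linarith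

lemma L_anti {x y z : ℝ} (hx : 0 < x) (hxy : x ≤ y) : L y z ≤ L x z := by
  unfold L
  have hy : 0 < y := lt_of_lt_of_le hx hxy
  have h1 : y⁻¹ ≤ x⁻¹ := by gcongr
  have h2 : (0:ℝ) < 1 + y⁻¹ := by have := inv_pos.2 hy; linarith
  have := Real.log_le_log h2 (by linarith : 1 + y⁻¹ ≤ 1 + x⁻¹)
  linarith

lemma one_le_LB {k : ℕ} {x z : ℝ} (hz : 1 ≤ z) (hx : 0 < x) : 1 ≤ LB k x z := by
  rw [LB_eq]; exact one_le_E k (t_nonneg hz hx)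

lemma LB_anti {k : ℕ} {x y z : ℝ} (hz : 1 ≤ z) (hx : 0 < x) (hxy : x ≤ y) :
    LB k y z ≤ LB k x z := by
  rw [LB_eq, LB_eq]
  have hy : 0 < y := lt_of_lt_of_le hx hxy
  apply E_mono k (t_nonneg hz hy)
  have hL : 0 < L y z := lt_of_lt_of_le (by linarith) (one_le_L hz hy)
  have := Real.log_le_log hL (L_anti hx hxy)
  linarith

lemma key (k : ℕ) {z x : ℝ} (hz : 1 ≤ z) (hx : 0 < x) (hx1 : x ≤ 1) :
    (LB k 1 z)⁻¹ ≤ UB k x z / z := by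
  set tx := (1/2) * Real.log (L x z) with htx
  set t1 := (1/2) * Real.log (L 1 z) with ht1
  have h01 : (0:ℝ) < 1 := one_pos
  have ht1n : 0 ≤ t1 := t_nonneg hz h01
  have htxn : 0 ≤ tx := t_nonneg hz hx
  have hLx : z ≤ L x z := z_le_L hx
  have hL1 : z ≤ L 1 z := z_le_L h01
  have hz0 : (0:ℝ) < z := lt_of_lt_of_le one_pos hz
  have hLxpos : 0 < L x z := lt_of_lt_of_le hz0 hLx
  have hL1pos : 0 < L 1 z := lt_of_lt_of_le hz0 hL1
  have ht1tx : t1 ≤ tx := by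
    have := Real.log_le_log hL1pos (L_anti hx hx1)
    rw [htx, ht1]; linarith
  have hEtx : E k tx ≤ Real.exp (tx - t1) * E k t1 := E_le_exp_mul k ht1n ht1tx
  have hEtxpos : 0 < E k tx := lt_of_lt_of_le one_pos (one_le_E k htxn)
  have hEt1pos : 0 < E k t1 := lt_of_lt_of_le one_pos (one_le_E k ht1n)
  -- exp tx * exp tx = L x z
  have hexp_tx : Real.exp tx * Real.exp tx = L x z := by
    rw [← Real.exp_add, htx]
    rw [show (1/2) * Real.log (L x z) + (1/2) * Real.log (L x z) = Real.log (L x z) by ring]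
    exact Real.exp_log hLxpos
  have hexp_t1 : Real.exp t1 * Real.exp t1 = L 1 z := by
    rw [← Real.exp_add, ht1]
    rw [show (1/2) * Real.log (L 1 z) + (1/2) * Real.log (L 1 z) = Real.log (L 1 z) by ring]
    exact Real.exp_log hL1pos
  have hz_le : z ≤ Real.exp tx * Real.exp t1 := by
    nlinarith [Real.exp_pos tx, Real.exp_pos t1, sq_nonneg (Real.exp tx * Real.exp t1 - z)]
  -- main: z * E k tx ≤ L x z * E k t1
  have hmain : z * E k tx ≤ L x z * E k t1 := by
    calc z * E k tx ≤ z * (Real.exp (tx - t1) * E k t1) := by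
          apply mul_le_mul_of_nonneg_left hEtx hz0.le
      _ = (z * Real.exp (tx - t1)) * E k t1 := by ring
      _ ≤ L x z * E k t1 := by
          apply mul_le_mul_of_nonneg_right _ hEt1pos.le
          have hh : Real.exp (tx - t1) * Real.exp t1 = Real.exp tx := by
            rw [← Real.exp_add]; ring_nf
          nlinarith [Real.exp_pos (tx - t1), Real.exp_pos t1, Real.exp_pos tx]
  rw [UB, LB_eq, LB_eq, ← htx, ← ht1]
  rw [div_div, le_div_iff₀ (by positivity), inv_mul_le_iff₀ hEt1pos]
  nlinarith
lemma contLB (k : ℕ) {z : ℝ} (hz : 1 ≤ z) :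
    ContinuousOn (fun ρ : ℝ => LB k ρ z) (Set.Ioi 0) := by
  have h1 : ContinuousOn (fun ρ : ℝ => 1 + ρ⁻¹) (Set.Ioi 0) :=
    continuousOn_const.add (continuousOn_id.inv₀ fun ρ hρ => ne_of_gt hρ)
  have h3 : ContinuousOn (fun ρ : ℝ => L ρ z) (Set.Ioi 0) := by
    unfold L
    apply continuousOn_const.add
    apply h1.log
    intro ρ hρ
    have := inv_pos.2 (Set.mem_Ioi.1 hρ)
    positivity
  have h4 : ContinuousOn (fun ρ : ℝ => Real.log (L ρ z)) (Set.Ioi 0) := by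
    apply h3.log
    intro ρ hρ
    have hzL := z_le_L (z := z) (Set.mem_Ioi.1 hρ)
    have : (0:ℝ) < L ρ z := by linarith
    exact ne_of_gt this
  unfold LB
  apply continuousOn_finset_sum
  intro j _
  exact ((continuousOn_const.mul h4).pow j).div_const _

end Aux

open MeasureTheory

theorem stmt_8 :
    ∃ C : ℝ, 0 < C ∧ ∀ (k : ℕ) (z : ℝ), 1 ≤ z → ∀ lam : ℝ, 0 < lam →
      ∀ p : EuclideanSpace ℝ (Fin 2),
      |(∫ ρ in Set.Ioc (lam + ‖p‖ ^ 2) 1, (ρ * LB k ρ z)⁻¹) -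
        ∫ ρ in Set.Ioc (lam + ‖p‖ ^ 2) 1, ((ρ + ρ ^ 2) * LB k ρ z)⁻¹| ≤
        C * UB k (lam + ‖p‖ ^ 2) z / z := by
  refine ⟨1, one_pos, fun k z hz lam hlam p => ?_⟩
  set x := lam + ‖p‖ ^ 2 with hxdef
  have hx : 0 < x := by positivity
  have hz0 : (0:ℝ) < z := lt_of_lt_of_le one_pos hz
  -- basic facts on the set
  have hsub : Set.Icc x 1 ⊆ Set.Ioi (0:ℝ) := fun ρ hρ => lt_of_lt_of_le hx hρ.1
  have hLBpos : ∀ ρ ∈ Set.Icc x 1, (0:ℝ) < LB k ρ z := fun ρ hρ =>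
    lt_of_lt_of_le one_pos (one_le_LB hz (hsub hρ))
  have hcLB : ContinuousOn (fun ρ : ℝ => LB k ρ z) (Set.Icc x 1) := (contLB k hz).mono hsub
  -- integrability
  have hint1 : IntegrableOn (fun ρ : ℝ => (ρ * LB k ρ z)⁻¹) (Set.Ioc x 1) := by
    apply IntegrableOn.mono_set _ Set.Ioc_subset_Icc_self
    apply ContinuousOn.integrableOn_compact isCompact_Icc
    apply ContinuousOn.inv₀ (continuousOn_id.mul hcLB)
    intro ρ hρ
    have h1 : (0:ℝ) < ρ := hsub hρ
    have h2 := hLBpos ρ hρ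
    exact ne_of_gt (mul_pos h1 h2)
  have hint2 : IntegrableOn (fun ρ : ℝ => ((ρ + ρ ^ 2) * LB k ρ z)⁻¹) (Set.Ioc x 1) := by
    apply IntegrableOn.mono_set _ Set.Ioc_subset_Icc_self
    apply ContinuousOn.integrableOn_compact isCompact_Icc
    apply ContinuousOn.inv₀ (((continuousOn_id.add (continuousOn_id.pow 2)).mul hcLB))
    intro ρ hρ
    have h1 : (0:ℝ) < ρ := hsub hρ
    have h2 := hLBpos ρ hρ
    show (ρ + ρ ^ 2) * LB k ρ z ≠ 0
    positivity
  -- difference of integrals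
  rw [← integral_sub hint1 hint2]
  have hcongr : ∀ ρ ∈ Set.Ioc x 1,
      (ρ * LB k ρ z)⁻¹ - ((ρ + ρ ^ 2) * LB k ρ z)⁻¹ = ((1 + ρ) * LB k ρ z)⁻¹ := by
    intro ρ hρ
    have h1 : (0:ℝ) < ρ := lt_trans hx hρ.1
    have h2 : (0:ℝ) < LB k ρ z := hLBpos ρ (Set.Ioc_subset_Icc_self hρ)
    have h3 : (0:ℝ) < 1 + ρ := by linarith
    field_simp
    ring
  rw [setIntegral_congr_fun measurableSet_Ioc hcongr]
  -- bound the integral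
  have hbound : ∀ ρ ∈ Set.Ioc x 1, ‖((1 + ρ) * LB k ρ z)⁻¹‖ ≤ (LB k 1 z)⁻¹ := by
    intro ρ hρ
    have h1 : (0:ℝ) < ρ := lt_trans hx hρ.1
    have h2 : (0:ℝ) < LB k ρ z := hLBpos ρ (Set.Ioc_subset_Icc_self hρ)
    have h3 : LB k 1 z ≤ LB k ρ z := LB_anti hz h1 hρ.2
    have h4 : (0:ℝ) < LB k 1 z := lt_of_lt_of_le one_pos (one_le_LB hz one_pos)
    have h5 : LB k 1 z ≤ (1 + ρ) * LB k ρ z := by nlinarith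
    rw [Real.norm_eq_abs, abs_of_nonneg (by positivity)]
    exact inv_anti₀ h4 h5
  have hint3 : IntegrableOn (fun ρ : ℝ => ((1 + ρ) * LB k ρ z)⁻¹) (Set.Ioc x 1) := by
    apply IntegrableOn.mono_set _ Set.Ioc_subset_Icc_self
    apply ContinuousOn.integrableOn_compact isCompact_Icc
    apply ContinuousOn.inv₀ ((continuousOn_const.add continuousOn_id).mul hcLB)
    intro ρ hρ
    have h1 : (0:ℝ) < ρ := hsub hρ
    have h2 := hLBpos ρ hρ
    show (1 + ρ) * LB k ρ z ≠ 0
    exact ne_of_gt (mul_pos (by linarith) h2)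
  have hmeas : volume (Set.Ioc x 1) < ⊤ := by
    rw [Real.volume_Ioc]; exact ENNReal.ofReal_lt_top
  have hnorm := norm_setIntegral_le_of_norm_le_const hmeas hbound
  rw [Real.norm_eq_abs] at hnorm
  rcases le_or_gt x 1 with hx1 | hx1
  · have hvol : (volume (Set.Ioc x 1)).toReal = 1 - x := by
      rw [Real.volume_Ioc, ENNReal.toReal_ofReal (by linarith)]
    have hkey := key k hz hx hx1
    have h4 : (0:ℝ) < LB k 1 z := lt_of_lt_of_le one_pos (one_le_LB hz one_pos)
    calc |∫ ρ in Set.Ioc x 1, ((1 + ρ) * LB k ρ z)⁻¹| ≤ (LB k 1 z)⁻¹ * (volume (Set.Ioc x 1)).toReal := hnorm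
      _ ≤ (LB k 1 z)⁻¹ * 1 := by
          rw [hvol]; apply mul_le_mul_of_nonneg_left (by linarith) (by positivity)
      _ ≤ UB k x z / z := by rw [mul_one]; exact hkey
      _ = 1 * UB k x z / z := by ring
  · rw [Set.Ioc_eq_empty (by linarith : ¬ x < 1)]
    simp only [Measure.restrict_empty, integral_zero_measure, abs_zero]
    have hUB : 0 ≤ UB k x z := by
      have h1 : 0 < LB k x z := lt_of_lt_of_le one_pos (one_le_LB hz hx)
      have h2 : 0 < L x z := lt_of_lt_of_le hz0 (z_le_L hx)
      unfold UB; positivity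
    positivity
end
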